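/- arXiv:1506.01884 — 3 statements merged into one kernel-verified Lean document; each statement's English description precedes it below -/
import Mathlib

section
/- Let $R$ be an associative unital ring and let $X_1,\dots,X_m$ be elements of $\End(\CC^N)^{\otimes m}\otimes R$ each supported in a distinct single tensor slot (i.e., $X_a = 1^{\otimes(a-1)}\otimes x_a$-type elements with coefficients in $R$ in slot $a$). Suppose that for all $a<b$ the commutator $[X_a, X_b]$ equals $P_{ab} Y_b - Y_b P_{ab}$ for some element $Y_b$ supported in slot $b$, where $P_{ab}$ is the permutation operator. Then, using $A^{(m)} P_{ab} = P_{ab} A^{(m)} = -A^{(m)}$ and the cyclic property of trace, the full trace $\mathrm{tr}_{1,\dots,m}\, A^{(m)} X_{\sigma(1)}\cdots X_{\sigma(m)}$ is independent of the permutation $\sigma\in\Sym_m$. -/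
/-!
Two adjacent factors `X_a X_b` may be exchanged inside `tr A (⋯)`: the difference is
`tr A U [P_{ab}, Y] V`, where `U` and `V` are products of factors in the other slots and hence
commute with `P_{ab}`. Pulling `P_{ab}` to the left gives `A P_{ab} = -A`; pulling it to the right
and once around the trace (legitimate because `P_{ab}` has central entries) gives `P_{ab} A = -A`,
so the two terms cancel. Adjacent transpositions generate all reorderings.
-/

/-- The element of `End(ℂ^N)^{⊗ m} ⊗ R` supported in tensor slot `a` with coefficients `c`. -/
noncomputable def slotMat {R : Type*} [Ring R] (N m : ℕ) (a : Fin m)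
    (c : Fin N → Fin N → R) : Matrix (Fin m → Fin N) (Fin m → Fin N) R :=
  fun f g => if ∀ k, k ≠ a → f k = g k then c (f a) (g a) else 0

/-- The permutation operator `P_σ` (with entries in `R`). -/
noncomputable def permMatR (R : Type*) [Ring R] (N m : ℕ) (σ : Equiv.Perm (Fin m)) :
    Matrix (Fin m → Fin N) (Fin m → Fin N) R :=
  fun f g => if f = g ∘ σ then 1 else 0

/-- The normalized antisymmetrizer with entries in `R` (a `ℚ`-algebra). -/
noncomputable def antisymR (R : Type*) [Ring R] [Algebra ℚ R] (N m : ℕ) :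
    Matrix (Fin m → Fin N) (Fin m → Fin N) R :=
  ((m.factorial : ℚ))⁻¹ •
    ∑ σ : Equiv.Perm (Fin m), (Equiv.Perm.sign σ : ℤ) • permMatR R N m σ

open Matrix Equiv

section Permutation

variable {R : Type*} [Ring R] {N m : ℕ}

lemma permMatR_mul_apply (σ : Perm (Fin m)) (M : Matrix (Fin m → Fin N) (Fin m → Fin N) R)
    (f g : Fin m → Fin N) : (permMatR R N m σ * M) f g = M (f ∘ ⇑σ⁻¹) g := by
  rw [mul_apply, Finset.sum_eq_single (f ∘ ⇑σ⁻¹)]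
  · simp [permMatR, Function.comp_assoc]
  · intro f' _ hf'
    have : f ≠ f' ∘ σ := fun he => hf' (by simp [he, Function.comp_assoc])
    simp [permMatR, this]
  · simp

lemma mul_permMatR_apply (σ : Perm (Fin m)) (M : Matrix (Fin m → Fin N) (Fin m → Fin N) R)
    (f g : Fin m → Fin N) : (M * permMatR R N m σ) f g = M f (g ∘ σ) := by
  rw [mul_apply, Finset.sum_eq_single (g ∘ σ)]
  · simp [permMatR]
  · intro f' _ hf'
    simp [permMatR, hf']
  · simp

lemma permMatR_mul_permMatR (σ τ : Perm (Fin m)) :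
    (permMatR R N m σ * permMatR R N m τ : Matrix (Fin m → Fin N) (Fin m → Fin N) R)
      = permMatR R N m (σ.trans τ) := by
  ext f g
  rw [permMatR_mul_apply]
  simp only [permMatR, coe_trans]
  refine if_congr ⟨fun he => ?_, fun he => ?_⟩ rfl rfl
  · funext k
    simpa using congrFun he (σ k)
  · funext k
    simpa using congrFun he (σ⁻¹ k)

/-- Over a noncommutative ring the trace is not cyclic, but it is for permutation matrices,
whose entries are central. -/
lemma trace_mul_permMatR (σ : Perm (Fin m)) (M : Matrix (Fin m → Fin N) (Fin m → Fin N) R) :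
    trace (M * permMatR R N m σ) = trace (permMatR R N m σ * M) := by
  simp only [trace, diag, permMatR_mul_apply, mul_permMatR_apply]
  exact Fintype.sum_equiv (σ⁻¹.arrowCongr (Equiv.refl (Fin N))) _ _
    (fun f => by simp [arrowCongr, Perm.inv_def, Function.comp_def])

lemma commute_permMatR_slotMat {σ : Perm (Fin m)} {c : Fin m} (hc : σ c = c)
    (k : Fin N → Fin N → R) : Commute (permMatR R N m σ) (slotMat N m c k) := by
  have hc' : σ⁻¹ c = c := by rw [Perm.inv_eq_iff_eq, hc]
  ext f g
  rw [permMatR_mul_apply, mul_permMatR_apply]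
  simp only [slotMat, Function.comp_apply, hc', hc]
  refine if_congr ⟨fun H j hj => ?_, fun H j hj => ?_⟩ rfl rfl
  · simpa using H (σ j) (by rwa [← hc, σ.injective.ne_iff])
  · simpa using H (σ⁻¹ j) (by rwa [← hc', σ⁻¹.injective.ne_iff])

end Permutation

section Antisymmetrizer

variable {R : Type*} [Ring R] [Algebra ℚ R] {N m : ℕ}

lemma antisymR_mul_permMatR (τ : Perm (Fin m)) :
    antisymR R N m * permMatR R N m τ = (Perm.sign τ : ℤ) • antisymR R N m := by
  rw [antisymR, Matrix.smul_mul, Finset.sum_mul, smul_comm]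
  congr 1
  rw [Finset.smul_sum]
  refine Fintype.sum_equiv (Equiv.mulLeft τ) _ _ fun ρ => ?_
  simp only [coe_mulLeft]
  rw [smul_mul_assoc, permMatR_mul_permMatR, smul_smul, map_mul, Units.val_mul, ← mul_assoc,
    ← Units.val_mul, Int.units_mul_self, Units.val_one, one_mul, Perm.mul_def]

lemma permMatR_mul_antisymR (τ : Perm (Fin m)) :
    permMatR R N m τ * antisymR R N m = (Perm.sign τ : ℤ) • antisymR R N m := by
  rw [antisymR, Matrix.mul_smul, Finset.mul_sum, smul_comm]
  congr 1
  rw [Finset.smul_sum]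
  refine Fintype.sum_equiv (Equiv.mulRight τ) _ _ fun ρ => ?_
  simp only [coe_mulRight]
  rw [mul_smul_comm, permMatR_mul_permMatR, smul_smul, map_mul, Units.val_mul,
    mul_comm (Perm.sign ρ : ℤ), ← mul_assoc, ← Units.val_mul, Int.units_mul_self, Units.val_one,
    one_mul, Perm.mul_def]

lemma antisymR_mul_permMatR_swap {a b : Fin m} (hab : a ≠ b) :
    antisymR R N m * permMatR R N m (swap a b) = -antisymR R N m := by
  simp [antisymR_mul_permMatR, Perm.sign_swap hab]

lemma permMatR_swap_mul_antisymR {a b : Fin m} (hab : a ≠ b) :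
    permMatR R N m (swap a b) * antisymR R N m = -antisymR R N m := by
  simp [permMatR_mul_antisymR, Perm.sign_swap hab]

lemma trace_antisymR_mul_lie_permMatR_swap {a b : Fin m} (hab : a ≠ b)
    (U V Y : Matrix (Fin m → Fin N) (Fin m → Fin N) R)
    (hU : Commute (permMatR R N m (swap a b)) U) (hV : Commute (permMatR R N m (swap a b)) V) :
    trace (antisymR R N m * (U * (⁅permMatR R N m (swap a b), Y⁆ * V))) = 0 := by
  have hAP : antisymR R N m * permMatR R N m (swap a b) = -antisymR R N m :=
    antisymR_mul_permMatR_swap hab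
  have hPA : permMatR R N m (swap a b) * antisymR R N m = -antisymR R N m :=
    permMatR_swap_mul_antisymR hab
  have hcyc := fun M => trace_mul_permMatR (R := R) (N := N) (swap a b) M
  generalize permMatR R N m (swap a b) = P at *
  generalize antisymR R N m = A at *
  have hleft : A * (U * (P * Y * V)) = A * P * (U * (Y * V)) := by
    rw [mul_assoc A P, ← mul_assoc P U, hU.eq]
    noncomm_ring
  have hright : A * (U * (Y * P * V)) = A * (U * (Y * V)) * P := by
    rw [mul_assoc Y P V, hV.eq]
    noncomm_ring
  rw [Ring.lie_def, sub_mul, mul_sub, mul_sub, trace_sub, hleft, hright, hAP, hcyc,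
    ← mul_assoc P, hPA, sub_self]

lemma trace_antisymR_mul_swap_adjacent {a b : Fin m} (hab : a ≠ b)
    (U V Xa Xb Y : Matrix (Fin m → Fin N) (Fin m → Fin N) R)
    (hU : Commute (permMatR R N m (swap a b)) U) (hV : Commute (permMatR R N m (swap a b)) V)
    (hX : ⁅Xa, Xb⁆ = ⁅permMatR R N m (swap a b), Y⁆) :
    trace (antisymR R N m * (U * (Xa * (Xb * V))))
      = trace (antisymR R N m * (U * (Xb * (Xa * V)))) := by
  rw [← sub_eq_zero, ← trace_sub,
    ← trace_antisymR_mul_lie_permMatR_swap hab U V Y hU hV, ← hX, Ring.lie_def]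
  noncomm_ring

end Antisymmetrizer

section Reordering

variable {R : Type*} [Ring R] [Algebra ℚ R] {N m : ℕ}
  (X : Fin m → Matrix (Fin m → Fin N) (Fin m → Fin N) R)

/-- The prefix `u` is what lets the induction pass through the `cons` case of `List.Perm`. -/
lemma trace_antisymR_mul_prod_perm
    (hP : ∀ a b c, c ≠ a → c ≠ b → Commute (permMatR R N m (swap a b)) (X c))
    (hX : ∀ a b, a ≠ b → ∃ Y, ⁅X a, X b⁆ = ⁅permMatR R N m (swap a b), Y⁆)
    {l₁ l₂ : List (Fin m)} (hl : l₁.Perm l₂) (u : List (Fin m)) (hu : (u ++ l₁).Nodup) :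
    trace (antisymR R N m * ((u.map X).prod * (l₁.map X).prod))
      = trace (antisymR R N m * ((u.map X).prod * (l₂.map X).prod)) := by
  induction hl generalizing u with
  | nil => rfl
  | cons a _ ih =>
    have hsplit (l : List (Fin m)) :
        (u.map X).prod * ((a :: l).map X).prod = ((u ++ [a]).map X).prod * (l.map X).prod := by
      simp [List.prod_append, mul_assoc]
    rw [hsplit, hsplit]
    exact ih _ (by simpa using hu)
  | swap b a l =>
    have hcomm {l' : List (Fin m)} (hal : a ∉ l') (hbl : b ∉ l') :
        Commute (permMatR R N m (swap a b)) (l'.map X).prod :=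
      Commute.list_prod_right _ _ fun _ hM => by
        obtain ⟨c, hc, rfl⟩ := List.mem_map.mp hM
        exact hP a b c (ne_of_mem_of_not_mem hc hal) (ne_of_mem_of_not_mem hc hbl)
    simp only [List.nodup_append, List.nodup_cons, List.mem_cons, not_or] at hu
    obtain ⟨-, ⟨⟨hab, hal⟩, hbl, -⟩, hdisj⟩ := hu
    have hau : a ∉ u := fun h => hdisj a h a (by simp) rfl
    have hbu : b ∉ u := fun h => hdisj b h b (by simp) rfl
    obtain ⟨Y, hY⟩ := hX a b hab
    simpa only [List.map_cons, List.prod_cons] using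
      trace_antisymR_mul_swap_adjacent hab _ _ _ _ Y (hcomm hau hbu) (hcomm hal hbl) hY
  | trans h₁₂ _ ih₁₂ ih₂₃ =>
    rw [ih₁₂ u hu]
    exact ih₂₃ u ((h₁₂.append_left u).nodup_iff.mp hu)

end Reordering

/-- if `X_1, …, X_m` are supported in distinct single tensor slots and for all
`a < b` the commutator `[X_a, X_b]` equals `P_{ab} Y_b - Y_b P_{ab}` with `Y_b` supported in
slot `b`, then the full trace `tr A^{(m)} X_{σ(1)} ⋯ X_{σ(m)}` does not depend on the
permutation `σ`. -/
theorem trace_antisym_prod_perm_invariant {R : Type*} [Ring R] [Algebra ℚ R] (N m : ℕ)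
    (x y : Fin m → Fin N → Fin N → R)
    (h : ∀ a b : Fin m, a < b →
      slotMat N m a (x a) * slotMat N m b (x b)
        - slotMat N m b (x b) * slotMat N m a (x a)
      = permMatR R N m (Equiv.swap a b) * slotMat N m b (y b)
        - slotMat N m b (y b) * permMatR R N m (Equiv.swap a b))
    (σ : Equiv.Perm (Fin m)) :
    Matrix.trace (antisymR R N m *
        ((List.finRange m).map (fun k => slotMat N m (σ k) (x (σ k)))).prod)
      = Matrix.trace (antisymR R N m *
        ((List.finRange m).map (fun k => slotMat N m k (x k))).prod) := by
  have hP (a b c : Fin m) (hca : c ≠ a) (hcb : c ≠ b) :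
      Commute (permMatR R N m (swap a b)) (slotMat N m c (x c)) :=
    commute_permMatR_slotMat (swap_apply_of_ne_of_ne hca hcb) _
  have hX (a b : Fin m) (hab : a ≠ b) : ∃ Y,
      ⁅slotMat N m a (x a), slotMat N m b (x b)⁆ = ⁅permMatR R N m (swap a b), Y⁆ := by
    simp only [Ring.lie_def]
    rcases hab.lt_or_gt with hlt | hgt
    · exact ⟨_, h a b hlt⟩
    · refine ⟨-slotMat N m a (y a), ?_⟩
      rw [Equiv.swap_comm, ← neg_sub, h b a hgt]
      noncomm_ring
  have hnodup : ([] ++ (List.finRange m).map σ).Nodup :=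
    (List.nodup_finRange m).map σ.injective
  simpa [List.map_map, Function.comp_def] using
    trace_antisymR_mul_prod_perm _ hP hX σ.map_finRange_perm [] hnodup
end

section
/- For a Manin matrix $M$ of size $N\times N$ over an associative ring (i.e., a matrix satisfying $[M_{ij}, M_{kl}] = [M_{kj}, M_{il}]$ for all $i,j,k,l$), the column determinant equals the trace of the antisymmetrized product: $\cdet M = \mathrm{tr}\, A^{(N)} M_1 \cdots M_N$, where $M_a$ denotes $M$ acting in the $a$-th copy of $\End\CC^N$ in $(\End\CC^N)^{\otimes N}$ and $A^{(N)}$ is the normalized antisymmetrizer. -/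
/-- Column determinant over a noncommutative ring. -/
noncomputable def cdet {R : Type*} [Ring R] (N : ℕ) (M : Fin N → Fin N → R) : R :=
  ∑ σ : Equiv.Perm (Fin N),
    (Equiv.Perm.sign σ : ℤ) • ((List.finRange N).map (fun j => M (σ j) j)).prod

/-! Expanding `A^{(N)} = (1/N!) ∑ sgn σ · P_σ` and the entries of `M_1 ⋯ M_N` turns the trace into
`(1/N!) ∑_g cdet (M_{g i, g j})_{i,j}` over all maps `g : Fin N → Fin N`. A non-injective `g`
gives a matrix with two equal rows, whose column determinant vanishes in any ring. For a
permutation `g` the Manin relations show that `cdet` is unchanged when the columns are reordered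
together with the rows, so each of the `N!` remaining terms is `cdet M`. -/

open Equiv Equiv.Perm Nat

section ColumnDeterminant

variable {R : Type*} [Ring R] {ι : Type*} [Fintype ι] [DecidableEq ι]

def IsManin (M : ι → ι → R) : Prop :=
  ∀ i j k l, M i j * M k l - M k l * M i j = M k j * M i l - M i l * M k j

def cdetList (M : ι → ι → R) (w : List ι) : R :=
  ∑ σ : Perm ι, (sign σ : ℤ) • (w.map fun j => M (σ j) j).prod

theorem cdetList_swap {M : ι → ι → R} (hM : IsManin M) {l₁ l₂ : List ι} {i j : ι}
    (h : (l₁ ++ i :: j :: l₂).Nodup) :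
    cdetList M (l₁ ++ i :: j :: l₂) = cdetList M (l₁ ++ j :: i :: l₂) := by
  simp only [List.nodup_append, List.nodup_cons, List.mem_cons, not_or] at h
  obtain ⟨-, ⟨⟨hij, hi₂⟩, hj₂, -⟩, h₁⟩ := h
  have hi₁ : i ∉ l₁ := fun hi => h₁ i hi i (Or.inl rfl) rfl
  have hj₁ : j ∉ l₁ := fun hj => h₁ j hj j (Or.inr (Or.inl rfl)) rfl
  have swap_fixes : ∀ l : List ι, i ∉ l → j ∉ l → ∀ σ : Perm ι,
      (l.map fun k => M ((σ * swap i j) k) k) = l.map fun k => M (σ k) k :=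
    fun l hi hj σ => List.map_congr_left fun k hk => by
      rw [mul_apply, swap_apply_of_ne_of_ne (ne_of_mem_of_not_mem hk hi)
        (ne_of_mem_of_not_mem hk hj)]
  let A (σ : Perm ι) := (l₁.map fun k => M (σ k) k).prod
  let B (σ : Perm ι) := (l₂.map fun k => M (σ k) k).prod
  let c (σ : Perm ι) := M (σ i) i * M (σ j) j - M (σ j) j * M (σ i) i
  -- By the Manin relation the commutator `c` is invariant under `σ ↦ σ * swap i j`, which flips
  -- the sign, so the terms of the difference cancel in pairs.
  have hc : ∀ σ, c (σ * swap i j) = c σ := fun σ => by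
    simp only [c, mul_apply, swap_apply_left, swap_apply_right]
    exact (hM (σ i) i (σ j) j).symm
  have hdiff : cdetList M (l₁ ++ i :: j :: l₂) - cdetList M (l₁ ++ j :: i :: l₂) =
      ∑ σ : Perm ι, (sign σ : ℤ) • (A σ * (c σ * B σ)) := by
    simp only [cdetList, ← Finset.sum_sub_distrib, ← smul_sub]
    refine Finset.sum_congr rfl fun σ _ => ?_
    simp only [List.map_append, List.map_cons, List.prod_append, List.prod_cons, A, B, c]
    noncomm_ring
  rw [← sub_eq_zero, hdiff]
  refine Finset.sum_ninvolution (· * swap i j) (fun σ => ?_) (fun σ _ => by simpa using hij)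
    (fun _ => Finset.mem_univ _) (mul_swap_involutive i j)
  simp only [hc, A, B, swap_fixes l₁ hi₁ hj₁, swap_fixes l₂ hi₂ hj₂, Perm.sign_mul, sign_swap hij,
    mul_neg, mul_one, Units.val_neg, neg_smul, add_neg_cancel]

theorem cdetList_append_perm {M : ι → ι → R} (hM : IsManin M) {w w' : List ι} (h : w.Perm w') :
    ∀ {l₀ : List ι}, (l₀ ++ w).Nodup → cdetList M (l₀ ++ w) = cdetList M (l₀ ++ w') := by
  induction h with
  | nil => exact fun _ => rfl
  | cons x _ ih => exact fun {l₀} hw => by simpa using ih (l₀ := l₀ ++ [x]) (by simpa using hw)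
  | swap x y t => exact fun hw => cdetList_swap hM hw
  | trans h₁ _ ih₁ ih₂ =>
    exact fun {l₀} hw => (ih₁ hw).trans (ih₂ ((h₁.append_left l₀).nodup_iff.mp hw))

theorem cdetList_perm {M : ι → ι → R} (hM : IsManin M) {w w' : List ι} (hw : w.Nodup)
    (h : w.Perm w') : cdetList M w = cdetList M w' :=
  cdetList_append_perm hM h (l₀ := []) hw

end ColumnDeterminant

section Cdet

variable {R : Type*} [Ring R] {N : ℕ}

theorem cdet_comp_perm {M : Fin N → Fin N → R} (hM : IsManin M) (ρ : Perm (Fin N)) :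
    cdet N (fun i j => M (ρ i) (ρ j)) = cdet N M := by
  have hcols : cdetList M ((List.finRange N).map ρ) = cdet N M :=
    cdetList_perm hM ((List.nodup_finRange N).map ρ.injective) ρ.map_finRange_perm
  rw [← hcols, cdet, cdetList]
  refine Fintype.sum_equiv (MulAut.conj ρ).toEquiv _ _ fun σ => ?_
  have hsign : sign (MulAut.conj ρ σ) = sign σ := by
    rw [MulAut.conj_apply, Perm.sign_mul, Perm.sign_mul, Perm.sign_inv, mul_right_comm,
      Int.units_mul_self, one_mul]
  simp only [MulEquiv.toEquiv_eq_coe, MulEquiv.coe_toEquiv, hsign, List.map_map]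
  simp [Function.comp_def]

theorem cdet_eq_zero_of_row_eq (A : Fin N → Fin N → R) {i j : Fin N} (hij : i ≠ j)
    (h : A i = A j) : cdet N A = 0 :=
  Finset.sum_ninvolution (swap i j * ·)
    (fun σ => by simp [Perm.sign_swap hij, apply_swap_eq_self h])
    (fun σ _ => (not_congr swap_mul_eq_iff).mpr hij) (fun _ => Finset.mem_univ _)
    (swap_mul_involutive i j)

theorem sum_cdet_comp {M : Fin N → Fin N → R} (hM : IsManin M) :
    ∑ g : Fin N → Fin N, cdet N (fun i j => M (g i) (g j)) = N ! • cdet N M := by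
  have hvanish : ∀ g ∉ Set.range (DFunLike.coe : Perm (Fin N) → Fin N → Fin N),
      cdet N (fun i j => M (g i) (g j)) = 0 := fun g hg => by
    obtain ⟨i, j, hgij, hij⟩ := Function.not_injective_iff.mp fun hinj =>
      hg ⟨.ofBijective g (Finite.injective_iff_bijective.mp hinj), rfl⟩
    exact cdet_eq_zero_of_row_eq _ hij (by simp only [hgij])
  calc ∑ g : Fin N → Fin N, cdet N (fun i j => M (g i) (g j))
      = ∑ ρ : Perm (Fin N), cdet N (fun i j => M (ρ i) (ρ j)) :=
        (Fintype.sum_of_injective _ DFunLike.coe_injective _ _ hvanish fun _ => rfl).symm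
    _ = ∑ _ρ : Perm (Fin N), cdet N M := Finset.sum_congr rfl fun ρ _ => cdet_comp_perm hM ρ
    _ = N ! • cdet N M := by simp [Fintype.card_perm]

end Cdet

section SlotMatrices

variable {R : Type*} [Ring R] {N m : ℕ}

theorem slotMat_list_prod_apply (c : Fin N → Fin N → R) {l : List (Fin m)} (hl : l.Nodup)
    (f g : Fin m → Fin N) :
    (l.map fun a => slotMat N m a c).prod f g =
      if ∀ k ∉ l, f k = g k then (l.map fun a => c (f a) (g a)).prod else 0 := by
  induction l generalizing f with
  | nil => simp [Matrix.one_apply, funext_iff]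
  | cons a t ih =>
    obtain ⟨hat, ht⟩ := List.nodup_cons.mp hl
    rw [List.map_cons, List.prod_cons, Matrix.mul_apply,
      Finset.sum_eq_single (Function.update f a (g a)) ?off (by simp)]
    case off =>
      intro h _ hne
      by_cases hs : ∀ k, k ≠ a → f k = h k
      · rw [ih ht, if_neg, mul_zero]
        refine fun hc => hne (funext fun k => ?_)
        obtain rfl | hk := eq_or_ne k a
        · simp [hc k hat]
        · simp [hk, hs k hk]
      · simp [slotMat, hs]
    have hmap : t.map (fun b => c (Function.update f a (g a) b) (g b)) =
        t.map fun b => c (f b) (g b) :=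
      List.map_congr_left fun b hb => by rw [Function.update_of_ne (ne_of_mem_of_not_mem hb hat)]
    have hcond : (∀ k ∉ t, Function.update f a (g a) k = g k) ↔ ∀ k ∉ a :: t, f k = g k := by
      refine ⟨fun h k hk => ?_, fun h k hk => ?_⟩
      · rw [List.mem_cons, not_or] at hk
        simpa [hk.1] using h k hk.2
      · obtain rfl | hka := eq_or_ne k a
        · simp
        · simpa [hka] using h k (by simp [hka, hk])
    simp only [slotMat, ih ht, hmap, hcond, Function.update_self,
      if_pos fun k (hk : k ≠ a) => (Function.update_of_ne hk (g a) f).symm]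
    split_ifs <;> simp

theorem slotMat_prod_apply (c : Fin N → Fin N → R) (f g : Fin m → Fin N) :
    ((List.finRange m).map fun a => slotMat N m a c).prod f g =
      ((List.finRange m).map fun a => c (f a) (g a)).prod := by
  rw [slotMat_list_prod_apply c (List.nodup_finRange m),
    if_pos fun k hk => absurd (List.mem_finRange k) hk]

theorem trace_permMatR_mul (σ : Perm (Fin m)) (X : Matrix (Fin m → Fin N) (Fin m → Fin N) R) :
    (permMatR R N m σ * X).trace = ∑ g, X (g ∘ σ.symm) g :=
  Finset.sum_congr rfl fun g _ => by
    simp only [Matrix.diag_apply, Matrix.mul_apply, permMatR, ← Equiv.comp_symm_eq, ite_mul,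
      one_mul, zero_mul, Finset.sum_ite_eq, Finset.mem_univ, if_true]

theorem trace_antisymR_mul [Algebra ℚ R] (X : Matrix (Fin m → Fin N) (Fin m → Fin N) R) :
    (antisymR R N m * X).trace =
      (m ! : ℚ)⁻¹ • ∑ g, ∑ σ : Perm (Fin m), (sign σ : ℤ) • X (g ∘ σ) g := by
  rw [antisymR, Matrix.smul_mul, Matrix.trace_smul, Finset.sum_mul, Matrix.trace_sum,
    Finset.sum_comm, ← Equiv.sum_comp (Equiv.inv _)]
  congr 1
  refine Finset.sum_congr rfl fun σ _ => ?_
  rw [Matrix.smul_mul, Matrix.trace_smul, trace_permMatR_mul, Finset.smul_sum]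
  simp [Perm.inv_def]

end SlotMatrices

/-- for a Manin matrix `M`, the column determinant equals the trace of the
antisymmetrized product: `cdet M = tr A^{(N)} M_1 ⋯ M_N`. -/
theorem cdet_eq_trace_antisym {R : Type*} [Ring R] [Algebra ℚ R] (N : ℕ)
    (M : Fin N → Fin N → R)
    (hManin : ∀ i j k l, M i j * M k l - M k l * M i j = M k j * M i l - M i l * M k j) :
    Matrix.trace (antisymR R N N *
        ((List.finRange N).map (fun a => slotMat N N a M)).prod)
      = cdet N M := by
  have hentry : ∀ g : Fin N → Fin N, ∑ σ : Perm (Fin N),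
      (sign σ : ℤ) • ((List.finRange N).map fun a => slotMat N N a M).prod (g ∘ σ) g =
        cdet N fun i j => M (g i) (g j) := fun g => by
    simp only [slotMat_prod_apply]
    rfl
  rw [trace_antisymR_mul, Finset.sum_congr rfl fun g _ => hentry g, sum_cdet_comp hManin,
    ← Nat.cast_smul_eq_nsmul ℚ, inv_smul_smul₀ (by positivity)]
end

section
/- Let $E_{ij}[-1]$ satisfy the $\gl_N$ current algebra relations and let $\tau$ satisfy $[\tau, E_{ij}[-1]] = E_{ij}[-2]$, so that $M = \tau + E[-1]$ is a Manin matrix, i.e. $[M_{ij}, M_{kl}] = [M_{kj}, M_{il}]$ for all indices. Then the matrix $\tau - E^t[-1]$ is again a Manin matrix: $[(\tau - E^t[-1])_{ij}, (\tau - E^t[-1])_{kl}] = [(\tau - E^t[-1])_{kj}, (\tau - E^t[-1])_{il}]$ for all indices. -/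
/-- if the entries `E i j r = E_{ij}[r]` satisfy the `gl_N` current algebra
relations and `[τ, E_{ij}[r]] = -r E_{ij}[r-1]`, then the matrix `τ - Eᵗ[-1]` (with entries
`δ_{ij} τ - E_{ji}[-1]`) satisfies the Manin property
`[(τ - Eᵗ[-1])_{ij}, (τ - Eᵗ[-1])_{kl}] = [(τ - Eᵗ[-1])_{kj}, (τ - Eᵗ[-1])_{il}]`. -/
theorem tau_sub_transpose_isManin {R : Type*} [Ring R] (N : ℕ) (τ : R)
    (E : Fin N → Fin N → ℤ → R)
    (hE : ∀ (i j k l : Fin N) (r s : ℤ), r < 0 → s < 0 →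
      E i j r * E k l s - E k l s * E i j r =
        (if k = j then E i l (r + s) else 0) - (if i = l then E k j (r + s) else 0))
    (hτ : ∀ (i j : Fin N) (r : ℤ), r < 0 →
      τ * E i j r - E i j r * τ = (-r) • E i j (r - 1)) :
    ∀ i j k l : Fin N,
      ((if i = j then τ else 0) - E j i (-1)) * ((if k = l then τ else 0) - E l k (-1))
        - ((if k = l then τ else 0) - E l k (-1)) * ((if i = j then τ else 0) - E j i (-1))
      = ((if k = j then τ else 0) - E j k (-1)) * ((if i = l then τ else 0) - E l i (-1))
        - ((if i = l then τ else 0) - E l i (-1)) * ((if k = j then τ else 0) - E j k (-1)) := by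
  intro i j k l
  have e2 : ∀ a b : Fin N, τ * E a b (-1) = E a b (-2) + E a b (-1) * τ := by
    intro a b
    have h := hτ a b (-1) (by norm_num)
    norm_num at h
    rwa [sub_eq_iff_eq_add] at h
  have eE : ∀ a b c d : Fin N, E a b (-1) * E c d (-1) =
      ((if c = b then E a d (-2) else 0) - (if a = d then E c b (-2) else 0))
        + E c d (-1) * E a b (-1) := by
    intro a b c d
    have h := hE a b c d (-1) (-1) (by norm_num) (by norm_num)
    norm_num at h
    rwa [sub_eq_iff_eq_add] at h
  simp only [sub_mul, mul_sub, ite_mul, mul_ite, zero_mul, mul_zero]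
  rw [eE j i l k, eE j k l i, e2 l k, e2 j i, e2 l i, e2 j k]
  simp only [eq_comm (a := l), eq_comm (a := j)]
  split_ifs <;> noncomm_ring
end
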